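/- For every integer k ≥ 0 and every θ ∈ ℝ, the Legendre polynomial satisfies |P_k(cos θ)| ≤ (2/π)·∫₀^{π/2} (1 − sin²θ·cos²φ)^{k/2} dφ. -/

import Mathlib

open MeasureTheory Metric Finset
open scoped RealInnerProductSpace ENNReal Classical

noncomputable section

/-- The Borel measurable-space structure on `n × n` real matrices. -/
instance matrixMeasurableSpace (n : ℕ) : MeasurableSpace (Matrix (Fin n) (Fin n) ℝ) := borel _

/-- The orthogonal group `O(n)`, as the group of `n × n` orthogonal real matrices. -/
abbrev OrthGroup (n : ℕ) := Matrix.orthogonalGroup (Fin n) ℝ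

/-- The natural action of an orthogonal matrix `T ∈ O(n)` on a vector `x ∈ ℝⁿ`. -/
def act {n : ℕ} (T : OrthGroup n) (x : EuclideanSpace ℝ (Fin n)) : EuclideanSpace ℝ (Fin n) :=
  Matrix.toEuclideanLin (T : Matrix (Fin n) (Fin n) ℝ) x

/-- The unit sphere `S^{n-1} = {x ∈ ℝⁿ : ‖x‖ = 1}`. -/
def unitSphere (n : ℕ) : Set (EuclideanSpace ℝ (Fin n)) := {x | ‖x‖ = 1}

/-- A set `A ⊆ ℝⁿ` avoids orthogonality if `⟪a, a'⟫ ≠ 0` for all `a, a' ∈ A`. -/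
def AvoidsOrthogonality {n : ℕ} (A : Set (EuclideanSpace ℝ (Fin n))) : Prop :=
  ∀ a ∈ A, ∀ a' ∈ A, ⟪a, a'⟫ ≠ 0

/-- The density `δ(A)` of a subset `A` of the unit sphere: its surface measure divided by
the total surface measure of the sphere. -/
def density (n : ℕ) (A : Set (EuclideanSpace ℝ (Fin n))) : ℝ :=
  ((volume : Measure (EuclideanSpace ℝ (Fin n))).toSphere
      (((↑) : sphere (0 : EuclideanSpace ℝ (Fin n)) 1 → EuclideanSpace ℝ (Fin n)) ⁻¹' A)).toReal /
  ((volume : Measure (EuclideanSpace ℝ (Fin n))).toSphere Set.univ).toReal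

/-- The Legendre polynomials, normalized so that `legendre k 1 = 1`:
`P₀ = 1`, `P₁(t) = t`, and `k·P_k(t) = (2k−1)·t·P_{k−1}(t) − (k−1)·P_{k−2}(t)` for `k ≥ 2`. -/
def legendre : ℕ → ℝ → ℝ
  | 0, _ => 1
  | 1, t => t
  | (k+2), t => ((2*(k:ℝ)+3) * t * legendre (k+1) t - ((k:ℝ)+1) * legendre k t) / ((k:ℝ)+2)

/-- `I` is an independent set of the orthogonality graph `G_X` of the symmetric set
`X = {±x_1, …, ±x_N}`: no two distinct indices of `I` correspond to orthogonal points. -/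
def IsIndependent {n N : ℕ} (x : Fin N → EuclideanSpace ℝ (Fin n)) (I : Finset (Fin N)) : Prop :=
  ∀ i ∈ I, ∀ j ∈ I, i ≠ j → ⟪x i, x j⟫ ≠ 0

/-- The set of points `{±x_i : i ∈ Y}`. -/
def pmSet {n N : ℕ} (x : Fin N → EuclideanSpace ℝ (Fin n)) (Y : Finset (Fin N)) :
    Set (EuclideanSpace ℝ (Fin n)) :=
  {v | ∃ i ∈ Y, v = x i ∨ v = -x i}

/-- `Y` and `Z` are geometrically congruent: some `S ∈ O(n)` maps `{±x_i : i ∈ Y}`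
onto `{±x_j : j ∈ Z}`. -/
def PmCongruent {n N : ℕ} (x : Fin N → EuclideanSpace ℝ (Fin n)) (Y Z : Finset (Fin N)) : Prop :=
  ∃ S : OrthGroup n, act S '' pmSet x Y = pmSet x Z

/-- The atomic density `a_X(I) = μ{T ∈ O(n) : {i : x_i ∈ T(A)} = I}`. -/
def atomicDensity {n N : ℕ} (μ : Measure (OrthGroup n)) (A : Set (EuclideanSpace ℝ (Fin n)))
    (x : Fin N → EuclideanSpace ℝ (Fin n)) (I : Finset (Fin N)) : ℝ :=
  (μ {T : OrthGroup n | {i : Fin N | x i ∈ act T '' A} = (I : Set (Fin N))}).toReal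

/-- `Γ(G_X)`: the supremum of `Σ_{I ∋ 1} a(I)` over all probability distributions `a` on the
independent sets of `G_X` satisfying the geometric congruence constraints. -/
def Gamma (n N : ℕ) (hN : 0 < N) (x : Fin N → EuclideanSpace ℝ (Fin n)) : ℝ :=
  sSup {g : ℝ | ∃ a : Finset (Fin N) → ℝ,
    (∀ I, 0 ≤ a I) ∧
    (∀ I, ¬ IsIndependent x I → a I = 0) ∧
    (∑ I ∈ Finset.univ.filter (fun I => IsIndependent x I), a I) = 1 ∧
    (∀ Y Z : Finset (Fin N), PmCongruent x Y Z →
      (∑ I ∈ Finset.univ.filter (fun I => IsIndependent x I ∧ Y ⊆ I), a I) =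
      (∑ I ∈ Finset.univ.filter (fun I => IsIndependent x I ∧ Z ⊆ I), a I)) ∧
    g = ∑ I ∈ Finset.univ.filter (fun I => IsIndependent x I ∧ (⟨0, hN⟩ : Fin N) ∈ I), a I}
namespace LaplaceAux
open intervalIntegral Complex

noncomputable def z (θ φ : ℝ) : ℂ := Real.cos θ + Real.sin θ * Real.cos φ * Complex.I

lemma hz (θ φ : ℝ) : HasDerivAt (z θ) (-((Real.sin θ : ℂ) * Real.sin φ) * Complex.I) φ := by
  have h : HasDerivAt (fun φ : ℝ => (Real.cos φ : ℂ)) (-Real.sin φ : ℝ) φ :=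
    (Real.hasDerivAt_cos φ).ofReal_comp
  have := (((h.const_mul (Real.sin θ : ℂ)).mul_const Complex.I).const_add (Real.cos θ : ℂ))
  convert this using 1
  · rfl
  · rfl
  · push_cast; ring

lemma hzc (θ : ℝ) : Continuous (z θ) := by unfold z; fun_prop

lemma hzpow (θ : ℝ) (k : ℕ) (φ : ℝ) :
    HasDerivAt (fun φ => z θ φ ^ k)
      ((k : ℂ) * z θ φ ^ (k - 1) * (-((Real.sin θ : ℂ) * Real.sin φ) * Complex.I)) φ := by
  have h1 := hasDerivAt_pow k (z θ φ)
  exact HasDerivAt.comp φ h1 (hz θ φ)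

noncomputable def J (θ : ℝ) (k : ℕ) : ℂ := ∫ φ in (0:ℝ)..Real.pi, z θ φ ^ k

lemma J_zero (θ : ℝ) : J θ 0 = Real.pi := by simp [J]

lemma J_one (θ : ℝ) : J θ 1 = Real.cos θ * Real.pi := by
  simp only [J, z, pow_one]
  rw [intervalIntegral.integral_add, intervalIntegral.integral_const]
  · have h1 : (∫ φ in (0:ℝ)..Real.pi, ((Real.sin θ : ℂ) * Real.cos φ * Complex.I))
        = (∫ φ in (0:ℝ)..Real.pi, (Real.cos φ : ℂ)) * (Real.sin θ * Complex.I) := by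
      rw [← intervalIntegral.integral_mul_const]
      congr 1; ext φ; ring
    rw [h1]
    have h2 : (∫ φ in (0:ℝ)..Real.pi, (Real.cos φ : ℂ)) = ((∫ φ in (0:ℝ)..Real.pi, Real.cos φ : ℝ) : ℂ) :=
      intervalIntegral.integral_ofReal
    rw [h2]
    simp [Real.sin_pi]
    ring
  · exact intervalIntegrable_const
  · apply Continuous.intervalIntegrable; fun_prop

lemma intJ (θ : ℝ) (m : ℕ) : IntervalIntegrable (fun φ => z θ φ ^ m)
    MeasureTheory.volume 0 Real.pi := by
  apply Continuous.intervalIntegrable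
  exact (hzc θ).pow m

lemma parts (θ : ℝ) (k : ℕ) :
    J θ (k+2) - (Real.cos θ : ℂ) * J θ (k+1)
      = -((k:ℂ)+1) * (J θ k - 2 * Real.cos θ * J θ (k+1) + J θ (k+2)) := by
  have c : ℂ := (Real.cos θ : ℂ)
  set s : ℂ := (Real.sin θ : ℂ) with hs
  -- integration by parts: u = z^(k+1), v = s * sin φ * I
  have hu : ∀ φ ∈ Set.uIcc (0:ℝ) Real.pi, HasDerivAt (fun φ => z θ φ ^ (k+1))
      (((k:ℂ)+1) * z θ φ ^ k * (-(s * Real.sin φ) * Complex.I)) φ := by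
    intro φ _
    have := hzpow θ (k+1) φ
    simp only [Nat.add_sub_cancel] at this
    convert this using 1
    simp only [s, Complex.ofReal_sin]
    push_cast
    ring
  have hv : ∀ φ ∈ Set.uIcc (0:ℝ) Real.pi, HasDerivAt (fun φ : ℝ => s * Real.sin φ * Complex.I)
      (s * Real.cos φ * Complex.I) φ := by
    intro φ _
    have h : HasDerivAt (fun φ : ℝ => (Real.sin φ : ℂ)) (Real.cos φ : ℝ) φ :=
      (Real.hasDerivAt_sin φ).ofReal_comp
    have := (h.const_mul s).mul_const Complex.I
    convert this using 1
  have hib : ∫ φ in (0:ℝ)..Real.pi, (z θ φ ^ (k+1)) * (s * Real.cos φ * Complex.I)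
      = (z θ Real.pi ^ (k+1)) * (s * Real.sin Real.pi * Complex.I)
        - (z θ 0 ^ (k+1)) * (s * Real.sin 0 * Complex.I)
        - ∫ φ in (0:ℝ)..Real.pi,
            (((k:ℂ)+1) * z θ φ ^ k * (-(s * Real.sin φ) * Complex.I)) * (s * Real.sin φ * Complex.I) := by
    apply intervalIntegral.integral_mul_deriv_eq_deriv_mul hu hv
    · apply Continuous.intervalIntegrable
      have := hzc θ
      fun_prop
    · apply Continuous.intervalIntegrable
      have := hzc θ
      fun_prop
  have pyth : s ^ 2 + (Real.cos θ : ℂ) ^ 2 = 1 := by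
    rw [hs]; norm_cast; exact Real.sin_sq_add_cos_sq θ
  have key1 : (∫ φ in (0:ℝ)..Real.pi, (z θ φ ^ (k+1)) * (s * Real.cos φ * Complex.I))
      = J θ (k+2) - (Real.cos θ : ℂ) * J θ (k+1) := by
    have e1 : ∀ φ : ℝ, (z θ φ ^ (k+1)) * (s * Real.cos φ * Complex.I)
        = z θ φ ^ (k+2) - (Real.cos θ : ℂ) * z θ φ ^ (k+1) := by
      intro φ; simp only [z, hs]; ring
    simp only [e1]
    rw [intervalIntegral.integral_sub (intJ θ (k+2)) ((intJ θ (k+1)).const_mul _),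
      intervalIntegral.integral_const_mul]
    rfl
  have key2 : (∫ φ in (0:ℝ)..Real.pi,
        (((k:ℂ)+1) * z θ φ ^ k * (-(s * Real.sin φ) * Complex.I)) * (s * Real.sin φ * Complex.I))
      = ((k:ℂ)+1) * (J θ k - 2 * Real.cos θ * J θ (k+1) + J θ (k+2)) := by
    have pyth2 : ∀ φ : ℝ, (Real.sin φ : ℂ) ^ 2 + (Real.cos φ : ℂ) ^ 2 = 1 := by
      intro φ; norm_cast; exact Real.sin_sq_add_cos_sq φ
    have e2 : ∀ φ : ℝ, (((k:ℂ)+1) * z θ φ ^ k * (-(s * Real.sin φ) * Complex.I)) * (s * Real.sin φ * Complex.I)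
        = ((k:ℂ)+1) * (z θ φ ^ k - 2 * (Real.cos θ : ℂ) * z θ φ ^ (k+1) + z θ φ ^ (k+2)) := by
      intro φ
      simp only [z, hs]
      linear_combination (((k:ℂ)+1) * (Real.cos θ + Real.sin θ * Real.cos φ * Complex.I) ^ k
          * (Real.sin θ:ℂ)^2) * pyth2 φ
        + (((k:ℂ)+1) * (Real.cos θ + Real.sin θ * Real.cos φ * Complex.I) ^ k) * pyth
        + (-(((k:ℂ)+1) * (Real.cos θ + Real.sin θ * Real.cos φ * Complex.I) ^ k
          * (Real.sin θ:ℂ)^2 * (Real.sin φ:ℂ)^2)) * Complex.I_sq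
        + (-(((k:ℂ)+1) * (Real.cos θ + Real.sin θ * Real.cos φ * Complex.I) ^ k
          * (Real.sin θ:ℂ)^2 * (Real.cos φ:ℂ)^2)) * Complex.I_sq
    simp only [e2]
    rw [intervalIntegral.integral_const_mul,
      intervalIntegral.integral_add ((intJ θ k).sub ((intJ θ (k+1)).const_mul _)) (intJ θ (k+2)),
      intervalIntegral.integral_sub (intJ θ k) ((intJ θ (k+1)).const_mul _),
      intervalIntegral.integral_const_mul]
    rfl
  rw [key1, Real.sin_pi, Real.sin_zero, key2] at hib
  simp only [Complex.ofReal_zero, mul_zero, zero_mul, sub_zero] at hib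
  rw [hib]; ring

lemma key (θ : ℝ) : ∀ k : ℕ, (legendre k (Real.cos θ) : ℂ) = J θ k / Real.pi := by
  have hπ : (Real.pi : ℂ) ≠ 0 := by
    norm_cast; exact Real.pi_ne_zero
  have main : ∀ k : ℕ, (legendre k (Real.cos θ) : ℂ) = J θ k / Real.pi ∧
      (legendre (k+1) (Real.cos θ) : ℂ) = J θ (k+1) / Real.pi := by
    intro k
    induction k with
    | zero =>
      constructor
      · rw [legendre]; simp [J_zero, hπ]
      · rw [legendre, J_one]
        push_cast [-Complex.ofReal_cos]
        field_simp
    | succ n ih =>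
      refine ⟨ih.2, ?_⟩
      have hp := parts θ n
      have hrec : ((n:ℂ)+2) * J θ (n+2) = (2*(n:ℂ)+3) * Real.cos θ * J θ (n+1) - ((n:ℂ)+1) * J θ n := by
        linear_combination hp
      show ((legendre (n+2) (Real.cos θ) : ℝ) : ℂ) = J θ (n+2) / Real.pi
      rw [legendre]
      push_cast [-Complex.ofReal_cos]
      rw [ih.1, ih.2]
      rw [eq_div_iff hπ]
      have hn2' : ((n:ℂ)+2) ≠ 0 := by
        have : (0:ℝ) < (n:ℝ)+2 := by positivity
        exact_mod_cast this.ne'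
      field_simp
      linear_combination (-1:ℂ) * hrec
  exact fun k => (main k).1

lemma normz (θ φ : ℝ) : ‖z θ φ‖
    = Real.sqrt (1 - Real.sin θ ^ 2 * Real.sin φ ^ 2) := by
  have : z θ φ = (Real.cos θ : ℝ) + (Real.sin θ * Real.cos φ : ℝ) * Complex.I := by
    simp only [z]; push_cast; ring
  rw [this, Complex.norm_add_mul_I]
  congr 1
  linear_combination Real.sin_sq_add_cos_sq θ + Real.sin θ ^ 2 * Real.sin_sq_add_cos_sq φ

lemma base_nonneg (θ u : ℝ) : 0 ≤ 1 - Real.sin θ ^ 2 * Real.sin u ^ 2 := by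
  nlinarith [Real.sin_sq_le_one θ, Real.sin_sq_le_one u, sq_nonneg (Real.sin θ * Real.sin u)]

lemma sqrt_pow_eq (x : ℝ) (hx : 0 ≤ x) (k : ℕ) : Real.sqrt x ^ k = x ^ ((k:ℝ)/2) := by
  rw [← Real.rpow_natCast (Real.sqrt x) k, Real.sqrt_eq_rpow, ← Real.rpow_mul hx]
  congr 1
  ring

theorem legendre_integral_bound' (k : ℕ) (θ : ℝ) :
    |legendre k (Real.cos θ)| ≤
      (2 / Real.pi) * ∫ φ in (0 : ℝ)..(Real.pi / 2),
        (1 - Real.sin θ ^ 2 * Real.cos φ ^ 2) ^ ((k : ℝ) / 2) := by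
  set G : ℝ → ℝ := fun t => Real.sqrt (1 - Real.sin θ ^ 2 * t ^ 2) ^ k with hG
  have hGc : Continuous G := by
    apply Continuous.pow
    apply Real.continuous_sqrt.comp
    fun_prop
  have hGsin : Continuous fun φ : ℝ => G (Real.sin φ) := hGc.comp Real.continuous_sin
  -- step 1: bound |legendre| by (1/π) ∫₀^π G(sin φ)
  have h1 : |legendre k (Real.cos θ)| = ‖J θ k‖ / Real.pi := by
    have := key θ k
    have h2 : ‖((legendre k (Real.cos θ) : ℝ) : ℂ)‖
        = ‖J θ k / Real.pi‖ := by rw [this]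
    rw [Complex.norm_real, Real.norm_eq_abs] at h2
    rw [h2, norm_div, Complex.norm_real, Real.norm_eq_abs, abs_of_pos Real.pi_pos]
  have h3 : ‖J θ k‖ ≤ ∫ φ in (0:ℝ)..Real.pi, G (Real.sin φ) := by
    have hb := intervalIntegral.norm_integral_le_integral_norm
      (μ := MeasureTheory.volume) (f := fun φ => z θ φ ^ k) (a := 0) (b := Real.pi) Real.pi_pos.le
    calc ‖J θ k‖ ≤ ∫ φ in (0:ℝ)..Real.pi, ‖z θ φ ^ k‖ := hb
      _ = ∫ φ in (0:ℝ)..Real.pi, G (Real.sin φ) := by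
          apply intervalIntegral.integral_congr
          intro φ _
          simp only [hG, norm_pow, normz]
  -- step 2: symmetry: ∫₀^π = 2 ∫₀^{π/2}
  have sym1 : (∫ φ in (Real.pi/2)..Real.pi, G (Real.sin φ))
      = ∫ φ in (0:ℝ)..(Real.pi/2), G (Real.sin φ) := by
    have h := intervalIntegral.integral_comp_sub_left (a := 0) (b := Real.pi/2)
      (fun x => G (Real.sin x)) Real.pi
    simp only [Real.sin_pi_sub] at h
    rw [show Real.pi - Real.pi/2 = Real.pi/2 by ring, show Real.pi - 0 = Real.pi by ring] at h
    exact h.symm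
  have split : (∫ φ in (0:ℝ)..Real.pi, G (Real.sin φ))
      = 2 * ∫ φ in (0:ℝ)..(Real.pi/2), G (Real.sin φ) := by
    rw [← intervalIntegral.integral_add_adjacent_intervals
      (hGsin.intervalIntegrable 0 (Real.pi/2)) (hGsin.intervalIntegrable (Real.pi/2) Real.pi),
      sym1]
    ring
  have sym2 : (∫ φ in (0:ℝ)..(Real.pi/2), G (Real.sin φ))
      = ∫ φ in (0:ℝ)..(Real.pi/2), G (Real.cos φ) := by
    have h := intervalIntegral.integral_comp_sub_left (a := 0) (b := Real.pi/2)
      (fun x => G (Real.sin x)) (Real.pi/2)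
    simp only [Real.sin_pi_div_two_sub] at h
    rw [show Real.pi/2 - Real.pi/2 = 0 by ring, show Real.pi/2 - 0 = Real.pi/2 by ring] at h
    exact h.symm
  have final : (∫ φ in (0:ℝ)..(Real.pi/2), G (Real.cos φ))
      = ∫ φ in (0 : ℝ)..(Real.pi / 2), (1 - Real.sin θ ^ 2 * Real.cos φ ^ 2) ^ ((k : ℝ) / 2) := by
    apply intervalIntegral.integral_congr
    intro φ _
    have h0 : 0 ≤ 1 - Real.sin θ ^ 2 * Real.cos φ ^ 2 := by
      nlinarith [Real.sin_sq_le_one θ, Real.cos_sq_le_one φ, sq_nonneg (Real.sin θ * Real.cos φ)]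
    simp only [hG]
    exact sqrt_pow_eq _ h0 k
  rw [h1]
  rw [div_le_iff₀ Real.pi_pos]
  calc ‖J θ k‖ ≤ ∫ φ in (0:ℝ)..Real.pi, G (Real.sin φ) := h3
    _ = 2 * ∫ φ in (0 : ℝ)..(Real.pi / 2),
        (1 - Real.sin θ ^ 2 * Real.cos φ ^ 2) ^ ((k : ℝ) / 2) := by
        rw [split, sym2, final]
    _ = 2 / Real.pi * (∫ φ in (0 : ℝ)..(Real.pi / 2),
        (1 - Real.sin θ ^ 2 * Real.cos φ ^ 2) ^ ((k : ℝ) / 2)) * Real.pi := by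
        field_simp

end LaplaceAux

/-- The classical integral bound for Legendre polynomials:
`|P_k(cos θ)| ≤ (2/π)·∫₀^{π/2} (1 − sin²θ·cos²φ)^{k/2} dφ`. -/
theorem legendre_integral_bound (k : ℕ) (θ : ℝ) :
    |legendre k (Real.cos θ)| ≤
      (2 / Real.pi) * ∫ φ in (0 : ℝ)..(Real.pi / 2),
        (1 - Real.sin θ ^ 2 * Real.cos φ ^ 2) ^ ((k : ℝ) / 2) := by
  exact LaplaceAux.legendre_integral_bound' k θ
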